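/- arXiv:1411.0210 — 2 statements merged into one kernel-verified Lean document; each statement's English description precedes it below -/
import Mathlib

section
/- Let A be a symmetric n×n real matrix and M = S·A^L·T. Suppose a_{ij} ≤ a_{ik} whenever j < k < i, and a_{ij} ≥ a_{ik} whenever i < j < k. Then every off-diagonal entry of M is nonpositive. -/
open Matrix Finset

/-- The (n)×(n+1) difference matrix: `S i i = -1`, `S i (i+1) = 1`, else `0`. -/
noncomputable def Smat (n : ℕ) : Matrix (Fin n) (Fin (n + 1)) ℝ :=
  Matrix.of fun i j => if (j : ℕ) = (i : ℕ) then -1 else if (j : ℕ) = (i : ℕ) + 1 then 1 else 0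

/-- The (n+1)×n cumulative-sum matrix: `T i j = 1` iff `j < i`. -/
noncomputable def Tmat (n : ℕ) : Matrix (Fin (n + 1)) (Fin n) ℝ :=
  Matrix.of fun i j => if (j : ℕ) < (i : ℕ) then 1 else 0

/-- The Laplacian associated with a symmetric matrix `A`:
off-diagonal entries `-A i j`, diagonal entry `∑_{k ≠ i} A i k`. -/
noncomputable def lap {m : Type*} [Fintype m] [DecidableEq m] (A : Matrix m m ℝ) :
    Matrix m m ℝ :=
  Matrix.of fun i j => if i = j then ∑ k ∈ Finset.univ.filter (fun k => k ≠ i), A i k else -A i j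

lemma Smat_mul_apply (n : ℕ) (B : Matrix (Fin (n + 1)) (Fin (n + 1)) ℝ) (i : Fin n)
    (q : Fin (n + 1)) : (Smat n * B) i q = B i.succ q - B i.castSucc q := by
  rw [Matrix.mul_apply]
  have key : ∀ p : Fin (n + 1), Smat n i p * B p q =
      (if p = i.succ then B i.succ q else 0) + (if p = i.castSucc then -B i.castSucc q else 0) := by
    intro p
    rcases eq_or_ne p i.succ with rfl | hs
    · simp [Smat, Fin.val_succ, Fin.ext_iff] <;> omega
    · rcases eq_or_ne p i.castSucc with rfl | hc
      · have : (i.castSucc : ℕ) ≠ (i : ℕ) + 1 := by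
          simp [Fin.coe_castSucc]
        simp [Smat, this, Fin.coe_castSucc, hs]
      · have h1 : (p : ℕ) ≠ (i : ℕ) := fun h => hc (Fin.ext (by simpa using h))
        have h2 : (p : ℕ) ≠ (i : ℕ) + 1 := fun h => hs (Fin.ext (by simpa using h))
        simp [Smat, h1, h2, hs, hc]
  rw [Finset.sum_congr rfl fun p _ => key p, Finset.sum_add_distrib]
  simp [Finset.sum_ite_eq', sub_eq_add_neg]

lemma lap_row_sum {m : Type*} [Fintype m] [DecidableEq m] (A : Matrix m m ℝ) (p : m) :
    ∑ q, lap A p q = 0 := by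
  classical
  rw [← Finset.sum_filter_add_sum_filter_not Finset.univ (fun q => q = p)]
  have h1 : Finset.univ.filter (fun q => q = p) = {p} := by
    ext q; simp
  have h2 : ∑ q ∈ Finset.univ.filter (fun q => ¬ q = p), lap A p q
      = -∑ q ∈ Finset.univ.filter (fun q => q ≠ p), A p q := by
    rw [← Finset.sum_neg_distrib]
    apply Finset.sum_congr rfl
    intro q hq
    simp only [Finset.mem_filter] at hq
    simp [lap, Ne.symm hq.2]
  rw [h1, h2, Finset.sum_singleton]
  have : ∑ q ∈ Finset.univ.filter (fun q => q ≠ p), A p q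
      = ∑ k ∈ Finset.univ.filter (fun k => k ≠ p), A p k := rfl
  simp [lap, this]

theorem offdiag_nonpos (n : ℕ) (A : Matrix (Fin (n + 1)) (Fin (n + 1)) ℝ)
    (hA : A.IsSymm)
    (h1 : ∀ i j k : Fin (n + 1), (j : ℕ) < k → (k : ℕ) < i → A i j ≤ A i k)
    (h2 : ∀ i j k : Fin (n + 1), (i : ℕ) < j → (j : ℕ) < k → A i k ≤ A i j) :
    ∀ i j : Fin n, i ≠ j → (Smat n * lap A * Tmat n) i j ≤ 0 := by
  intro i j hij
  have hM : (Smat n * lap A * Tmat n) i j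
      = ∑ q ∈ Finset.univ.filter (fun q : Fin (n + 1) => (j : ℕ) < (q : ℕ)),
          (lap A i.succ q - lap A i.castSucc q) := by
    rw [Matrix.mul_apply]
    rw [Finset.sum_congr rfl fun q _ => by rw [Smat_mul_apply]]
    rw [Finset.sum_filter]
    apply Finset.sum_congr rfl
    intro q _
    by_cases h : (j : ℕ) < (q : ℕ) <;> simp [Tmat, h]
  rcases lt_or_gt_of_ne hij with hlt | hgt
  · -- i < j : sum over q > j, both rows i, i+1 are below q
    rw [hM]
    apply Finset.sum_nonpos
    intro q hq
    simp only [Finset.mem_filter] at hq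
    have hjq : (j : ℕ) < (q : ℕ) := hq.2
    have hcs : i.castSucc ≠ q := by
      intro h; rw [← h] at hjq; simp [Fin.coe_castSucc] at hjq; omega
    have hss : i.succ ≠ q := by
      intro h; rw [← h] at hjq; simp [Fin.val_succ] at hjq; omega
    have e1 : lap A i.succ q = -A i.succ q := by simp [lap, hss]
    have e2 : lap A i.castSucc q = -A i.castSucc q := by simp [lap, hcs]
    rw [e1, e2]
    have : A i.castSucc q ≤ A i.succ q := by
      rw [hA.apply q i.castSucc, hA.apply q i.succ]
      exact h1 q i.castSucc i.succ (by simp) (by simp [Fin.val_succ]; omega)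
    linarith
  · -- j < i : use zero row sums to switch to q ≤ j
    have hsplit : ∑ q ∈ Finset.univ.filter (fun q : Fin (n + 1) => (j : ℕ) < (q : ℕ)),
          (lap A i.succ q - lap A i.castSucc q)
        = - ∑ q ∈ Finset.univ.filter (fun q : Fin (n + 1) => ¬ (j : ℕ) < (q : ℕ)),
          (lap A i.succ q - lap A i.castSucc q) := by
      have htot : ∑ q : Fin (n + 1), (lap A i.succ q - lap A i.castSucc q) = 0 := by
        rw [Finset.sum_sub_distrib, lap_row_sum, lap_row_sum]; ring
      rw [← Finset.sum_filter_add_sum_filter_not Finset.univ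
        (fun q : Fin (n + 1) => (j : ℕ) < (q : ℕ))] at htot
      linarith
    rw [hM, hsplit, neg_nonpos]
    apply Finset.sum_nonneg
    intro q hq
    simp only [Finset.mem_filter, not_lt] at hq
    have hqj : (q : ℕ) ≤ (j : ℕ) := hq.2
    have hcs : i.castSucc ≠ q := by
      intro h; rw [← h] at hqj; simp [Fin.coe_castSucc] at hqj; omega
    have hss : i.succ ≠ q := by
      intro h; rw [← h] at hqj; simp [Fin.val_succ] at hqj; omega
    have e1 : lap A i.succ q = -A i.succ q := by simp [lap, hss]
    have e2 : lap A i.castSucc q = -A i.castSucc q := by simp [lap, hcs]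
    rw [e1, e2]
    have : A i.succ q ≤ A i.castSucc q := by
      rw [hA.apply q i.succ, hA.apply q i.castSucc]
      exact h2 q i.castSucc i.succ (by simp; omega) (by simp [Fin.val_succ])
    linarith
end

section
/- Let D be the n×n matrix with D[i,j] = |i - j| and D^L its distance Laplacian. If x is any eigenvector of D^L corresponding to the largest eigenvalue λ_n, then the entries of x are monotone: either x_1 ≥ x_2 ≥ ... ≥ x_n or x_1 ≤ x_2 ≤ ... ≤ x_n. -/
/-!
Let `y = S x` be the vector of consecutive differences of `x` and `T` the cumulative-sum matrix,
so that `T (S x) = x - x₀ 𝟙`. As `D^L 𝟙 = 0`, the matrix `M = S D^L T` satisfies `M y = λ y`,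
and every entry of `M` is positive. If `y` changed sign, the triangle inequality would be strict
in every row, giving `λ |y| < M |y|` entrywise. Integrating `|y|` to a monotone vector `v` of
mean zero, one gets `v ⬝ D^L v = g ⬝ M |y|` and `v ⬝ v = g ⬝ |y|` where `g = vᵀ T` is the
vector of tail sums of `v`, which is nonnegative and nonzero. Hence the Rayleigh quotient of `v`
exceeds `λ`, contradicting the maximality of `λ`.
-/

open Matrix Finset

section Laplacian

variable {m : Type*} [Fintype m] [DecidableEq m]

theorem sum_lap_apply (A : Matrix m m ℝ) (i : m) : ∑ j, lap A i j = 0 := by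
  have hoff : ∑ j ∈ univ.erase i, lap A i j = -∑ j ∈ univ.erase i, A i j := by
    rw [← sum_neg_distrib]
    exact sum_congr rfl fun j hj => if_neg (ne_of_mem_erase hj).symm
  rw [← add_sum_erase _ _ (mem_univ i), hoff]
  simp [lap, filter_ne']

theorem lap_mulVec_const (A : Matrix m m ℝ) (c : ℝ) : lap A *ᵥ (fun _ => c) = 0 := by
  ext i
  simp [mulVec, dotProduct, ← sum_mul, sum_lap_apply]

theorem Matrix.IsSymm.lap {A : Matrix m m ℝ} (hA : A.IsSymm) : (lap A).IsSymm := by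
  ext i j
  by_cases h : i = j
  · subst h; rfl
  · simp [_root_.lap, h, Ne.symm h, hA.apply i j]

end Laplacian

theorem LinearMap.IsSymmetric.inner_apply_self_le {E : Type*} [NormedAddCommGroup E]
    [InnerProductSpace ℝ E] [FiniteDimensional ℝ E] {T : E →ₗ[ℝ] E} (hT : T.IsSymmetric)
    {c : ℝ} (hc : ∀ μ : ℝ, Module.End.HasEigenvalue T μ → μ ≤ c) (v : E) :
    inner ℝ (T v) v ≤ c * inner ℝ v v := by
  set b := hT.eigenvectorBasis rfl
  have hTb : ∀ i, inner ℝ (T v) (b i) = hT.eigenvalues rfl i * inner ℝ v (b i) := by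
    intro i
    rw [hT, hT.apply_eigenvectorBasis, inner_smul_right]
    rfl
  calc inner ℝ (T v) v = ∑ i, hT.eigenvalues rfl i * (inner ℝ v (b i) * inner ℝ (b i) v) := by
        simp only [← b.sum_inner_mul_inner (T v) v, hTb, mul_assoc]
    _ ≤ ∑ i, c * (inner ℝ v (b i) * inner ℝ (b i) v) := by
        gcongr with i
        · rw [real_inner_comm]; exact mul_self_nonneg _
        · exact hc _ (hT.hasEigenvalue_eigenvalues rfl i)
    _ = c * inner ℝ v v := by rw [← mul_sum, b.sum_inner_mul_inner]

theorem Matrix.IsHermitian.dotProduct_mulVec_le {m : Type*} [Fintype m] [DecidableEq m]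
    {L : Matrix m m ℝ} (hL : L.IsHermitian) {c : ℝ}
    (hc : ∀ μ : ℝ, (∃ x : m → ℝ, x ≠ 0 ∧ L *ᵥ x = μ • x) → μ ≤ c) (v : m → ℝ) :
    v ⬝ᵥ L *ᵥ v ≤ c * (v ⬝ᵥ v) := by
  have hT := isSymmetric_toEuclideanLin_iff.mpr hL
  refine hT.inner_apply_self_le (fun μ hμ => hc μ ?_) (WithLp.toLp 2 v)
  obtain ⟨x, hx⟩ := hμ.exists_hasEigenvector
  exact ⟨x.ofLp, by simpa using hx.2,
    congrArg WithLp.ofLp (Module.End.mem_eigenspace_iff.mp hx.1)⟩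

theorem Finset.abs_sum_lt_sum_abs {ι : Type*} {s : Finset ι} {t : ι → ℝ} {p q : ι}
    (hps : p ∈ s) (hqs : q ∈ s) (hp : t p < 0) (hq : 0 < t q) :
    |∑ k ∈ s, t k| < ∑ k ∈ s, |t k| := by
  rw [abs_lt, ← sum_neg_distrib]
  constructor
  · exact sum_lt_sum (fun k _ => neg_abs_le _) ⟨q, hqs, by rw [abs_of_pos hq]; linarith⟩
  · exact sum_lt_sum (fun k _ => le_abs_self _) ⟨p, hps, by rw [abs_of_neg hp]; linarith⟩

section Differences

variable {n : ℕ}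

theorem smat_mulVec_apply (v : Fin (n + 1) → ℝ) (i : Fin n) :
    (Smat n *ᵥ v) i = v i.succ - v i.castSucc := by
  have hrow : (fun j => Smat n i j) = Pi.single i.succ 1 - Pi.single i.castSucc 1 := by
    ext j
    simp only [Smat, of_apply, Pi.sub_apply, Pi.single_apply, Fin.ext_iff, Fin.val_succ,
      Fin.val_castSucc]
    split_ifs <;> first | omega | norm_num
  simp only [mulVec, hrow, sub_dotProduct, single_dotProduct, one_mul]

theorem tmat_mulVec_zero (v : Fin n → ℝ) : (Tmat n *ᵥ v) 0 = 0 := by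
  simp [Tmat, mulVec, dotProduct]

theorem tmat_mulVec_succ (v : Fin n → ℝ) (i : Fin n) :
    (Tmat n *ᵥ v) i.succ = (Tmat n *ᵥ v) i.castSucc + v i := by
  have hrow : (fun j => Tmat n i.succ j) = (fun j => Tmat n i.castSucc j) + Pi.single i 1 := by
    ext j
    simp only [Tmat, of_apply, Pi.add_apply, Pi.single_apply, Fin.ext_iff, Fin.val_succ,
      Fin.val_castSucc]
    split_ifs <;> first | omega | norm_num
  simp only [mulVec, hrow, add_dotProduct, single_dotProduct, one_mul]

theorem tmat_mulVec_smat_mulVec (v : Fin (n + 1) → ℝ) :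
    Tmat n *ᵥ (Smat n *ᵥ v) = v - fun _ => v 0 := by
  ext i
  induction i using Fin.induction with
  | zero => simp [tmat_mulVec_zero]
  | succ i ih =>
    rw [tmat_mulVec_succ, ih, smat_mulVec_apply]
    simp

theorem vecMul_tmat_apply (v : Fin (n + 1) → ℝ) (k : Fin n) :
    (v ᵥ* Tmat n) k = ∑ i ∈ Ioi k.castSucc, v i := by
  simp [vecMul, dotProduct, Tmat, ← filter_lt_eq_Ioi, sum_filter, Fin.lt_def]

theorem monotone_iff_smat_mulVec_nonneg (v : Fin (n + 1) → ℝ) :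
    Monotone v ↔ ∀ i, 0 ≤ (Smat n *ᵥ v) i := by
  simp only [Fin.monotone_iff_le_succ, smat_mulVec_apply, sub_nonneg]

theorem antitone_iff_smat_mulVec_nonpos (v : Fin (n + 1) → ℝ) :
    Antitone v ↔ ∀ i, (Smat n *ᵥ v) i ≤ 0 := by
  simp only [Fin.antitone_iff_succ_le, smat_mulVec_apply, sub_nonpos]

theorem exists_sum_eq_zero_smat_mulVec_eq (z : Fin n → ℝ) :
    ∃ v : Fin (n + 1) → ℝ, ∑ i, v i = 0 ∧ Smat n *ᵥ v = z := by
  set w := Tmat n *ᵥ z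
  refine ⟨w - fun _ => (∑ i, w i) / (n + 1), ?_, ?_⟩
  · simp only [Pi.sub_apply, sum_sub_distrib, sum_const, card_univ, Fintype.card_fin, nsmul_eq_mul]
    push_cast
    field_simp
    ring
  · ext i
    simp [smat_mulVec_apply, w, tmat_mulVec_succ]

theorem dotProduct_tmat_mulVec_smat_mulVec {v : Fin (n + 1) → ℝ} (hv : ∑ i, v i = 0)
    (u : Fin (n + 1) → ℝ) : v ⬝ᵥ (Tmat n *ᵥ (Smat n *ᵥ u)) = v ⬝ᵥ u := by
  rw [tmat_mulVec_smat_mulVec, dotProduct_sub, sub_eq_self]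
  simp [dotProduct, ← sum_mul, hv]

theorem smat_mul_mul_tmat_mulVec_smat_mulVec {L : Matrix (Fin (n + 1)) (Fin (n + 1)) ℝ}
    (hL : ∀ c, L *ᵥ (fun _ => c) = 0) (x : Fin (n + 1) → ℝ) :
    (Smat n * L * Tmat n) *ᵥ (Smat n *ᵥ x) = Smat n *ᵥ (L *ᵥ x) := by
  rw [← mulVec_mulVec, ← mulVec_mulVec, tmat_mulVec_smat_mulVec, mulVec_sub, hL, sub_zero]

theorem smat_mul_mul_tmat_apply (L : Matrix (Fin (n + 1)) (Fin (n + 1)) ℝ) (i j : Fin n) :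
    (Smat n * L * Tmat n) i j = ∑ b ∈ Ioi j.castSucc, (L i.succ b - L i.castSucc b) := by
  rw [mul_apply]
  exact (vecMul_tmat_apply (fun b => (Smat n * L) i b) j).trans
    (sum_congr rfl fun b _ => smat_mulVec_apply (fun a => L a b) i)

end Differences

section SignChanges

variable {ι : Type*} [Fintype ι] [DecidableEq ι] {v : ι → ℝ}

theorem Finset.sum_nonneg_of_sum_univ_eq_zero (hv : ∑ i, v i = 0) {s : Finset ι}
    (h : (∀ i ∈ s, 0 ≤ v i) ∨ ∀ i ∉ s, v i ≤ 0) : 0 ≤ ∑ i ∈ s, v i := by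
  rcases h with h | h
  · exact sum_nonneg h
  · have hc : ∑ i ∈ sᶜ, v i ≤ 0 := sum_nonpos fun i hi => h i (mem_compl.mp hi)
    linarith [sum_add_sum_compl s v]

theorem Finset.sum_pos_of_sum_univ_eq_zero (hv : ∑ i, v i = 0) {s : Finset ι}
    (h : (s.Nonempty ∧ ∀ i ∈ s, 0 < v i) ∨ (sᶜ.Nonempty ∧ ∀ i ∉ s, v i < 0)) :
    0 < ∑ i ∈ s, v i := by
  rcases h with ⟨hs, h⟩ | ⟨hs, h⟩
  · exact sum_pos h hs
  · have hc : ∑ i ∈ sᶜ, v i < 0 := sum_neg (fun i hi => h i (mem_compl.mp hi)) hs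
    linarith [sum_add_sum_compl s v]

end SignChanges

theorem Monotone.sum_Ioi_nonneg {ι : Type*} [Fintype ι] [LinearOrder ι]
    [LocallyFiniteOrderTop ι] {v : ι → ℝ} (hmono : Monotone v) (hv : ∑ i, v i = 0) (a : ι) :
    0 ≤ ∑ i ∈ Ioi a, v i := by
  refine sum_nonneg_of_sum_univ_eq_zero hv ?_
  by_contra! h
  obtain ⟨⟨b, hb, hvb⟩, ⟨i, hi, hvi⟩⟩ := h
  rw [mem_Ioi] at hb
  rw [mem_Ioi, not_lt] at hi
  linarith [hmono (hi.trans hb.le)]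

theorem abs_mulVec_lt_mulVec_abs {ι κ : Type*} [Fintype κ] {M : Matrix ι κ ℝ}
    (hM : ∀ i j, 0 < M i j) {y : κ → ℝ} {p q : κ} (hp : y p < 0) (hq : 0 < y q) (k : ι) :
    |(M *ᵥ y) k| < (M *ᵥ fun j => |y j|) k := by
  calc |(M *ᵥ y) k| < ∑ j, |M k j * y j| :=
        abs_sum_lt_sum_abs (mem_univ p) (mem_univ q) (mul_neg_of_pos_of_neg (hM k p) hp)
          (mul_pos (hM k q) hq)
    _ = (M *ᵥ fun j => |y j|) k := by
        simp only [abs_mul, abs_of_pos (hM k _)]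
        rfl

section TopEigenvector

variable {n : ℕ} {L : Matrix (Fin (n + 1)) (Fin (n + 1)) ℝ} {lam : ℝ}

theorem exists_lt_dotProduct_mulVec (hL : ∀ c, L *ᵥ (fun _ => c) = 0) {z : Fin n → ℝ}
    (hz : ∀ k, 0 ≤ z k) (hz0 : z ≠ 0) (hlt : ∀ k, lam * z k < ((Smat n * L * Tmat n) *ᵥ z) k) :
    ∃ v, lam * (v ⬝ᵥ v) < v ⬝ᵥ L *ᵥ v := by
  obtain ⟨v, hv, hSv⟩ := exists_sum_eq_zero_smat_mulVec_eq z
  have hg : ∀ k, 0 ≤ (v ᵥ* Tmat n) k := fun k => by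
    rw [vecMul_tmat_apply]
    exact ((monotone_iff_smat_mulVec_nonneg v).mpr (hSv ▸ hz)).sum_Ioi_nonneg hv _
  have hvv : v ⬝ᵥ v = (v ᵥ* Tmat n) ⬝ᵥ z := by
    rw [← dotProduct_tmat_mulVec_smat_mulVec hv v, hSv, dotProduct_mulVec]
  have hvLv : v ⬝ᵥ L *ᵥ v = (v ᵥ* Tmat n) ⬝ᵥ ((Smat n * L * Tmat n) *ᵥ z) := by
    rw [← dotProduct_tmat_mulVec_smat_mulVec hv (L *ᵥ v),
      ← smat_mul_mul_tmat_mulVec_smat_mulVec hL, hSv, dotProduct_mulVec]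
  obtain ⟨k, hk⟩ : ∃ k, (v ᵥ* Tmat n) k ≠ 0 := by
    by_contra! hg0
    apply hz0
    have hvv0 : v ⬝ᵥ v = 0 := by rw [hvv, funext hg0]; exact zero_dotProduct z
    rw [← hSv, dotProduct_self_eq_zero.mp hvv0, mulVec_zero]
  refine ⟨v, ?_⟩
  rw [hvv, hvLv, ← smul_eq_mul, ← dotProduct_smul]
  exact sum_lt_sum (fun i _ => mul_le_mul_of_nonneg_left (hlt i).le (hg i))
    ⟨k, mem_univ k, mul_lt_mul_of_pos_left (hlt k) ((hg k).lt_of_ne' hk)⟩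

theorem antitone_or_monotone_of_mulVec_eq_smul (hL : ∀ c, L *ᵥ (fun _ => c) = 0)
    (hM : ∀ i j, 0 < (Smat n * L * Tmat n) i j) (hmax : ∀ v, v ⬝ᵥ L *ᵥ v ≤ lam * (v ⬝ᵥ v))
    {x : Fin (n + 1) → ℝ} (hx : L *ᵥ x = lam • x) : Antitone x ∨ Monotone x := by
  rw [antitone_iff_smat_mulVec_nonpos, monotone_iff_smat_mulVec_nonneg]
  by_contra! h
  obtain ⟨⟨q, hq⟩, ⟨p, hp⟩⟩ := h
  set y := Smat n *ᵥ x
  have hMy : (Smat n * L * Tmat n) *ᵥ y = lam • y := by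
    rw [smat_mul_mul_tmat_mulVec_smat_mulVec hL, hx, mulVec_smul]
  have hz0 : (fun k => |y k|) ≠ 0 := fun h => by
    have := congrFun h p
    simp only [Pi.zero_apply, abs_eq_zero] at this
    linarith
  obtain ⟨v, hv⟩ := exists_lt_dotProduct_mulVec hL (fun k => abs_nonneg (y k)) hz0 fun k =>
    calc lam * |y k| ≤ |lam * y k| := by rw [abs_mul]; gcongr; exact le_abs_self lam
      _ = |((Smat n * L * Tmat n) *ᵥ y) k| := by rw [hMy]; rfl
      _ < _ := abs_mulVec_lt_mulVec_abs hM hp hq k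
  exact (hmax v).not_gt hv

end TopEigenvector

section PathDistance

variable {n : ℕ} {D : Matrix (Fin (n + 1)) (Fin (n + 1)) ℝ}
  (hD : ∀ i j : Fin (n + 1), D i j = |(i : ℝ) - (j : ℝ)|)
include hD

theorem lap_path_apply (a b : Fin (n + 1)) :
    lap D a b = (if a = b then lap D a a else 0) - |(a : ℝ) - b| := by
  by_cases h : a = b
  · subst h
    simp
  · simp [lap, h, hD]

theorem lap_path_diag_nonneg (a : Fin (n + 1)) : 0 ≤ lap D a a := by
  simp only [lap, of_apply]
  exact sum_nonneg fun k _ => hD a k ▸ abs_nonneg _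

theorem isHermitian_lap_path : (lap D).IsHermitian :=
  isHermitian_iff_isSymm.mpr <| Matrix.IsSymm.lap <| by
    ext i j
    simp [hD, abs_sub_comm]

theorem lap_path_succ_sub_castSucc_pos (i : Fin n) {b : Fin (n + 1)} (hb : i.castSucc < b) :
    0 < lap D i.succ b - lap D i.castSucc b := by
  have hib : (i : ℝ) + 1 ≤ b := by exact_mod_cast Fin.lt_def.mp hb
  have hd : 0 ≤ if i.succ = b then lap D i.succ i.succ else 0 := by
    split_ifs
    exacts [lap_path_diag_nonneg hD _, le_rfl]
  rw [lap_path_apply hD, lap_path_apply hD i.castSucc, if_neg hb.ne]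
  simp only [Fin.val_succ, Fin.val_castSucc, Nat.cast_add, Nat.cast_one]
  rw [abs_of_nonpos (by linarith), abs_of_nonpos (by linarith)]
  linarith

theorem lap_path_succ_sub_castSucc_neg (i : Fin n) {b : Fin (n + 1)} (hb : b ≤ i.castSucc) :
    lap D i.succ b - lap D i.castSucc b < 0 := by
  have hib : (b : ℝ) ≤ i := by exact_mod_cast Fin.le_def.mp hb
  have hd : 0 ≤ if i.castSucc = b then lap D i.castSucc i.castSucc else 0 := by
    split_ifs
    exacts [lap_path_diag_nonneg hD _, le_rfl]
  rw [lap_path_apply hD, lap_path_apply hD i.castSucc,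
    if_neg (hb.trans_lt i.castSucc_lt_succ).ne']
  simp only [Fin.val_succ, Fin.val_castSucc, Nat.cast_add, Nat.cast_one]
  rw [abs_of_nonneg (by linarith), abs_of_nonneg (by linarith)]
  linarith

theorem smat_mul_lap_path_mul_tmat_pos (i j : Fin n) : 0 < (Smat n * lap D * Tmat n) i j := by
  rw [smat_mul_mul_tmat_apply]
  have hsum : ∑ b, (lap D i.succ b - lap D i.castSucc b) = 0 := by
    rw [sum_sub_distrib, sum_lap_apply, sum_lap_apply, sub_zero]
  refine sum_pos_of_sum_univ_eq_zero hsum ?_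
  rcases le_or_gt i j with hij | hij
  · refine Or.inl ⟨⟨Fin.last n, mem_Ioi.mpr j.castSucc_lt_last⟩, fun b hb => ?_⟩
    exact lap_path_succ_sub_castSucc_pos hD i
      ((Fin.castSucc_le_castSucc_iff.mpr hij).trans_lt (mem_Ioi.mp hb))
  · refine Or.inr ⟨⟨0, by simp⟩, fun b hb => ?_⟩
    rw [mem_Ioi, not_lt] at hb
    exact lap_path_succ_sub_castSucc_neg hD i (hb.trans (Fin.castSucc_lt_castSucc_iff.mpr hij).le)

end PathDistance

theorem path_distLap_eigvec_monotone_general (n : ℕ)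
    (D : Matrix (Fin (n + 1)) (Fin (n + 1)) ℝ)
    (hD : ∀ i j : Fin (n + 1), D i j = |(i : ℝ) - (j : ℝ)|)
    (lam : ℝ)
    (hmax : ∀ μ : ℝ, (∃ x : Fin (n + 1) → ℝ, x ≠ 0 ∧ (lap D).mulVec x = μ • x) → μ ≤ lam) :
    ∀ x : Fin (n + 1) → ℝ, x ≠ 0 → (lap D).mulVec x = lam • x →
      Antitone x ∨ Monotone x :=
  fun _ _ hx => antitone_or_monotone_of_mulVec_eq_smul (lap_mulVec_const D)
    (smat_mul_lap_path_mul_tmat_pos hD) ((isHermitian_lap_path hD).dotProduct_mulVec_le hmax) hx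

theorem path_distLap_eigvec_monotone (n : ℕ) (hn : 1 ≤ n)
    (D : Matrix (Fin (n + 1)) (Fin (n + 1)) ℝ)
    (hD : ∀ i j : Fin (n + 1), D i j = |(i : ℝ) - (j : ℝ)|)
    (lam : ℝ)
    (hev : ∃ x : Fin (n + 1) → ℝ, x ≠ 0 ∧ (lap D).mulVec x = lam • x)
    (hmax : ∀ μ : ℝ, (∃ x : Fin (n + 1) → ℝ, x ≠ 0 ∧ (lap D).mulVec x = μ • x) → μ ≤ lam) :
    ∀ x : Fin (n + 1) → ℝ, x ≠ 0 → (lap D).mulVec x = lam • x →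
      Antitone x ∨ Monotone x :=
  path_distLap_eigvec_monotone_general n D hD lam hmax
end
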